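/- arXiv:2508.08494 — 7 statements merged into one kernel-verified Lean document; each statement's English description precedes it below -/
import Mathlib

section
/- Let N be a natural number and let v ∈ ℂ^{N+1} be a nonzero vector with J_N v = μ v for some μ ∈ ℂ. Then v is an eigenvector of the symmetric Pascal matrix T_N: there exists λ ∈ ℂ with T_N v = λ v. -/
noncomputable section

/-- The `(N+1) × (N+1)` symmetric Pascal matrix, with entries `binom(j+k, j)`. -/
def pascalMatrix (R : Type*) [Semiring R] (N : ℕ) :
    Matrix (Fin (N + 1)) (Fin (N + 1)) R :=
  fun j k => (Nat.choose ((j : ℕ) + (k : ℕ)) (j : ℕ) : R)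

/-- Off-diagonal entry `a(n) = (N+1)²n - n³` of the Jacobi matrix `J_N`. -/
def aEnt (N n : ℕ) : ℂ := ((N : ℂ) + 1) ^ 2 * (n : ℂ) - (n : ℂ) ^ 3

/-- Diagonal entry `b(n) = 2n³ + 3n² + 2n - (N+1)²n` of the Jacobi matrix `J_N`. -/
def bEnt (N n : ℕ) : ℂ :=
  2 * (n : ℂ) ^ 3 + 3 * (n : ℂ) ^ 2 + 2 * (n : ℂ) - ((N : ℂ) + 1) ^ 2 * (n : ℂ)

/-- The `(N+1) × (N+1)` tridiagonal matrix `J_N`, with `(J_N)_{n,n} = b(n)` and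
`(J_N)_{n,n-1} = (J_N)_{n-1,n} = a(n)`. -/
def jacobiMatrix (N : ℕ) : Matrix (Fin (N + 1)) (Fin (N + 1)) ℂ :=
  fun m n =>
    if (m : ℕ) = (n : ℕ) then bEnt N (m : ℕ)
    else if (m : ℕ) + 1 = (n : ℕ) then aEnt N (n : ℕ)
    else if (n : ℕ) + 1 = (m : ℕ) then aEnt N (m : ℕ)
    else 0

/-! Since `T_N` commutes with `J_N`, it maps each eigenspace of `J_N` into itself, and these
eigenspaces are lines: row `n` of `J_N v = μ v` determines `v (n+1)` from `v n` and `v (n-1)`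
because `a(n+1) ≠ 0` for `n < N`, so an eigenvector is determined by `v 0`. The commutation
amounts to the symmetry of `J_N T_N`, a polynomial identity in `N`, `j`, `k` once the neighbouring
binomial coefficients are expressed through `(a+1) binom(a+b+1, a+1) = (a+b+1) binom(a+b, a)`. -/

open Matrix

theorem Matrix.exists_mulVec_eq_smul_of_commute {ι K : Type*} [Fintype ι] [Field K]
    {A B : Matrix ι ι K} (hAB : Commute A B) {μ : K} (i : ι)
    (hA : ∀ u, A *ᵥ u = μ • u → u i = 0 → u = 0) {v : ι → K} (hv : A *ᵥ v = μ • v) :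
    ∃ c : K, B *ᵥ v = c • v := by
  by_cases hvi : v i = 0
  · exact ⟨0, by simp [hA v hv hvi]⟩
  set w := B *ᵥ v
  have hw : A *ᵥ w = μ • w := by
    rw [mulVec_mulVec, hAB.eq, ← mulVec_mulVec, hv, mulVec_smul]
  refine ⟨w i / v i, sub_eq_zero.mp (hA _ ?_ ?_)⟩
  · rw [mulVec_sub, mulVec_smul, hw, hv, smul_sub, smul_comm]
  · simp [hvi]

lemma aEnt_zero (N : ℕ) : aEnt N 0 = 0 := by simp [aEnt]

lemma aEnt_succ_self (N : ℕ) : aEnt N (N + 1) = 0 := by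
  unfold aEnt; push_cast; ring

lemma aEnt_ne_zero {N n : ℕ} (h₀ : 0 < n) (hN : n ≤ N) : aEnt N n ≠ 0 := by
  have : aEnt N n = ((n * ((N + 1 - n) * (N + 1 + n)) : ℕ) : ℂ) := by
    unfold aEnt; push_cast [Nat.cast_sub (by omega : n ≤ N + 1)]; ring
  rw [this, Nat.cast_ne_zero]
  exact Nat.mul_ne_zero (by omega) (Nat.mul_ne_zero (by omega) (by omega))

/-- At `n = 0` the junk value `f (0 - 1) = f 0` is harmless, being multiplied by `a(0) = 0`;
likewise `f (N + 1)` by `a(N+1) = 0` at `n = N`. -/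
def jacobiRow (N : ℕ) (f : ℕ → ℂ) (n : ℕ) : ℂ :=
  aEnt N n * f (n - 1) + bEnt N n * f n + aEnt N (n + 1) * f (n + 1)

lemma jacobiMatrix_apply_mul (N : ℕ) (f : ℕ → ℂ) (n m : Fin (N + 1)) :
    jacobiMatrix N n m * f m =
      (if (m : ℕ) = n then bEnt N n * f n else 0) +
      (if (m : ℕ) = n + 1 then aEnt N (n + 1) * f (n + 1) else 0) +
      (if (m : ℕ) = n - 1 then aEnt N n * f (n - 1) else 0) := by
  obtain ⟨n, hn⟩ := n
  obtain ⟨m, hm⟩ := m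
  simp only [jacobiMatrix]
  rcases Nat.eq_zero_or_pos n with rfl | hn₀
  · split_ifs <;> first | omega | (subst_vars; simp [aEnt_zero])
  · split_ifs <;> first | omega | (subst_vars; simp)

lemma jacobiMatrix_mulVec_apply (N : ℕ) (f : ℕ → ℂ) (n : Fin (N + 1)) :
    (jacobiMatrix N *ᵥ fun m => f m) n = jacobiRow N f n := by
  simp only [mulVec, dotProduct, jacobiMatrix_apply_mul]
  rw [Fin.sum_univ_eq_sum_range (fun m => (if m = (n : ℕ) then bEnt N n * f n else 0) +
      (if m = n + 1 then aEnt N (n + 1) * f (n + 1) else 0) +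
      (if m = n - 1 then aEnt N n * f (n - 1) else 0))]
  simp only [Finset.sum_add_distrib, Finset.sum_ite_eq', Finset.mem_range]
  rw [if_pos n.isLt, if_pos (show (n : ℕ) - 1 < N + 1 by omega), jacobiRow]
  split_ifs
  · ring
  · rw [show (n : ℕ) = N by omega, aEnt_succ_self]; ring

lemma eq_zero_of_jacobiRow_eq_smul {N : ℕ} {μ : ℂ} {f : ℕ → ℂ}
    (hf : ∀ n < N, jacobiRow N f n = μ * f n) (h₀ : f 0 = 0) : ∀ n ≤ N, f n = 0 := by
  intro n
  induction n using Nat.strong_induction_on with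
  | _ n ih =>
    rcases n with _ | n
    · exact fun _ => h₀
    intro hn
    have hrow := hf n (by omega)
    rw [jacobiRow, ih n (by omega) (by omega), ih (n - 1) (by omega) (by omega)] at hrow
    exact (mul_eq_zero.mp (by linear_combination hrow)).resolve_left (aEnt_ne_zero (by omega) hn)

lemma jacobiMatrix_eigenvector_eq_zero_of_apply_zero {N : ℕ} {μ : ℂ} {u : Fin (N + 1) → ℂ}
    (hu : jacobiMatrix N *ᵥ u = μ • u) (h₀ : u 0 = 0) : u = 0 := by
  set f : ℕ → ℂ := fun i => if h : i < N + 1 then u ⟨i, h⟩ else 0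
  have hfu : (fun m : Fin (N + 1) => f m) = u := funext fun m => dif_pos m.isLt
  have hrow : ∀ n < N, jacobiRow N f n = μ * f n := fun n hn => by
    have := congrFun hu ⟨n, by omega⟩
    rw [← hfu, jacobiMatrix_mulVec_apply] at this
    simpa using this
  have hzero := eq_zero_of_jacobiRow_eq_smul hrow h₀
  funext m
  rw [← hfu]
  exact hzero m (Nat.lt_succ_iff.mp m.isLt)

lemma cast_succ_mul_choose_add_succ (a b : ℕ) :
    ((a : ℂ) + 1) * ((a + 1 + b).choose (a + 1) : ℂ) =
      ((a : ℂ) + b + 1) * ((a + b).choose a : ℂ) := by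
  have := Nat.add_one_mul_choose_eq (a + b) a
  rw [Nat.add_right_comm a 1 b]
  exact_mod_cast (this.trans (mul_comm _ _)).symm

lemma aEnt_mul_cast_choose_pred (N a b : ℕ) :
    aEnt N a * (((a : ℂ) + b) * ((a - 1 + b).choose (a - 1) : ℂ)) =
      aEnt N a * ((a : ℂ) * ((a + b).choose a : ℂ)) := by
  rcases a with _ | a
  · simp [aEnt_zero]
  · have := cast_succ_mul_choose_add_succ a b
    push_cast at this ⊢
    linear_combination (-aEnt N (a + 1)) * this

lemma jacobiRow_pascal_symm (N j k : ℕ) :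
    jacobiRow N (fun i => ((i + k).choose i : ℂ)) j =
      jacobiRow N (fun i => ((i + j).choose i : ℂ)) k := by
  rcases Nat.eq_zero_or_pos (j + k) with hjk | hjk
  · obtain ⟨rfl, rfl⟩ : j = 0 ∧ k = 0 := by omega
    rfl
  have hsym : ((k + j).choose k : ℂ) = ((j + k).choose j : ℂ) := by
    rw [Nat.choose_symm_add, add_comm]
  have down_j := aEnt_mul_cast_choose_pred N j k
  have down_k := aEnt_mul_cast_choose_pred N k j
  have up_j := cast_succ_mul_choose_add_succ j k
  have up_k := cast_succ_mul_choose_add_succ k j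
  rw [hsym] at down_k up_k
  have hne : (j : ℂ) + k ≠ 0 := by exact_mod_cast hjk.ne'
  -- `a(j)` is divisible by `j` but not by `j + k`: clearing the denominator of
  -- `binom(j+k-1, j-1) = j / (j+k) * binom(j+k, j)` needs the factor `j + k`.
  refine sub_eq_zero.mp ((mul_eq_zero.mp ?_).resolve_left hne)
  unfold jacobiRow bEnt
  simp only [aEnt, Nat.cast_add, Nat.cast_one, hsym] at down_j down_k ⊢
  linear_combination down_j - down_k
    + ((j : ℂ) + k) * (((N : ℂ) + 1) ^ 2 - ((j : ℂ) + 1) ^ 2) * up_j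
    - ((j : ℂ) + k) * (((N : ℂ) + 1) ^ 2 - ((k : ℂ) + 1) ^ 2) * up_k

lemma pascalMatrix_transpose (R : Type*) [Semiring R] (N : ℕ) :
    (pascalMatrix R N)ᵀ = pascalMatrix R N := by
  ext j k
  simp only [transpose_apply, pascalMatrix]
  rw [add_comm, Nat.choose_symm_add]

lemma jacobiMatrix_transpose (N : ℕ) : (jacobiMatrix N)ᵀ = jacobiMatrix N := by
  ext m n
  simp only [transpose_apply, jacobiMatrix]
  split_ifs <;> first | rfl | (congr 1 <;> omega)

lemma jacobiMatrix_mul_pascalMatrix_apply (N : ℕ) (j k : Fin (N + 1)) :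
    (jacobiMatrix N * pascalMatrix ℂ N) j k =
      jacobiRow N (fun i => ((i + k).choose i : ℂ)) j :=
  jacobiMatrix_mulVec_apply N (fun i => ((i + k).choose i : ℂ)) j

theorem commute_jacobiMatrix_pascalMatrix (N : ℕ) :
    Commute (jacobiMatrix N) (pascalMatrix ℂ N) := by
  have hsymm : (jacobiMatrix N * pascalMatrix ℂ N)ᵀ = jacobiMatrix N * pascalMatrix ℂ N := by
    ext j k
    rw [transpose_apply, jacobiMatrix_mul_pascalMatrix_apply,
      jacobiMatrix_mul_pascalMatrix_apply, jacobiRow_pascal_symm]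
  calc jacobiMatrix N * pascalMatrix ℂ N = (jacobiMatrix N * pascalMatrix ℂ N)ᵀ := hsymm.symm
    _ = pascalMatrix ℂ N * jacobiMatrix N := by
      rw [transpose_mul, pascalMatrix_transpose, jacobiMatrix_transpose]

theorem stmt2_general (N : ℕ) (v : Fin (N + 1) → ℂ) (μ : ℂ)
    (h : (jacobiMatrix N).mulVec v = μ • v) :
    ∃ lam : ℂ, (pascalMatrix ℂ N).mulVec v = lam • v :=
  exists_mulVec_eq_smul_of_commute (commute_jacobiMatrix_pascalMatrix N) 0
    (fun _ hu h₀ => jacobiMatrix_eigenvector_eq_zero_of_apply_zero hu h₀) h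

theorem stmt2 (N : ℕ) (v : Fin (N + 1) → ℂ) (hv : v ≠ 0) (μ : ℂ)
    (h : (jacobiMatrix N).mulVec v = μ • v) :
    ∃ lam : ℂ, (pascalMatrix ℂ N).mulVec v = lam • v :=
  stmt2_general N v μ h
end
end

section
/- Let p be an odd prime and N = p − 1. The coefficients of the polynomial P_N(z)·Q_N(z) ∈ ℚ[z] are p-integral; let f̄ ∈ 𝔽_p[z] denote its reduction modulo p. Then for every z ∈ 𝔽_p with z ≠ 0 and z ≠ 1, f̄(z) = (A_z)² in 𝔽_p, where A_z is the natural number #{(x,y) ∈ 𝔽_p × 𝔽_p : y² = x(x−1)(x−z)} cast into 𝔽_p. (Since the Legendre elliptic curve E_z : y² = x(x−1)(x−z) has exactly one point at infinity, A_z = #E_z(𝔽_p) − 1, so this says f(v; z) ≡ (#E_z(𝔽_p) − 1)² mod p.) -/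
open Polynomial Finset

noncomputable section

/-- The rising Pochhammer symbol `(q)_k = q(q+1)⋯(q+k-1)` over `ℚ`. -/
def poch (q : ℚ) (k : ℕ) : ℚ := (ascPochhammer ℚ k).eval q

/-- Coefficient of `z^k` in `P_N(z) = ₂F₁(-N/2, N/2+1; -N; z)`. -/
def Pcoef (N k : ℕ) : ℚ :=
  poch (-(N : ℚ) / 2) k * poch ((N : ℚ) / 2 + 1) k /
    (poch (-(N : ℚ)) k * (Nat.factorial k : ℚ))

/-- Coefficient of `z^k` in `Q_N(z) = ₂F₁(-N/2, -3N/2-1; -N; z)`. -/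
def Qcoef (N k : ℕ) : ℚ :=
  poch (-(N : ℚ) / 2) k * poch (-(3 * (N : ℚ)) / 2 - 1) k /
    (poch (-(N : ℚ)) k * (Nat.factorial k : ℚ))

/-- The polynomial `P_N(z)`. -/
def Ppoly (N : ℕ) : ℚ[X] := ∑ k ∈ Finset.range (N / 2 + 1), C (Pcoef N k) * X ^ k

/-- The polynomial `Q_N(z)`. -/
def Qpoly (N : ℕ) : ℚ[X] := ∑ k ∈ Finset.range (N / 2 + 1), C (Qcoef N k) * X ^ k

/-- Reduction of a `p`-integral rational number modulo `p`. -/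
def ratRed (p : ℕ) (q : ℚ) : ZMod p := (q.num : ZMod p) * (q.den : ZMod p)⁻¹

/-! Write `p = 2m + 1`. Modulo `p` we have `-N ≡ 1` and `N/2 + 1 ≡ -3N/2 - 1 ≡ -N/2 = -m`,
so the coefficients of `P_N` and `Q_N` both reduce to `((-m)_k / k!)² = C(m,k)²`: the two
polynomials reduce to the Hasse polynomial `H_m(z) = ∑ C(m,k)² z^k`. On the curve side, by
Euler's criterion `t` has `1 + t^m` square roots in `𝔽_p`, so `A_z ≡ ∑_x (x(x-1)(x-z))^m`;
since `∑_x x^i` vanishes for `i < 2(p-1)` except at `i = p-1`, where it is `-1`, this is minus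
the coefficient of `x^{2m}` in `(x(x-1)(x-z))^m`, namely `-(-1)^m H_m(z)`. -/

open scoped Nat

/-- In positive characteristic `Rat.cast` is additive and multiplicative only on rationals whose
denominator does not vanish in `α`; `RatReducesTo q x` says that `q` is one of them, with image
`x`. -/
def RatReducesTo {α : Type*} [DivisionRing α] (q : ℚ) (x : α) : Prop :=
  (q.den : α) ≠ 0 ∧ (q : α) = x

def PolyReducesTo {α : Type*} [DivisionRing α] (f : ℚ[X]) (F : α[X]) : Prop :=
  ∀ i, RatReducesTo (f.coeff i) (F.coeff i)

section Reduction

variable {α : Type*} [DivisionRing α]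

lemma ratReducesTo_zero : RatReducesTo (0 : ℚ) (0 : α) := by
  simp [RatReducesTo]

lemma RatReducesTo.add {q r : ℚ} {x y : α} (hq : RatReducesTo q x) (hr : RatReducesTo r y) :
    RatReducesTo (q + r) (x + y) := by
  refine ⟨fun h => ?_, by rw [Rat.cast_add_of_ne_zero hq.1 hr.1, hq.2, hr.2]⟩
  obtain ⟨c, hc⟩ := Rat.add_den_dvd q r
  exact mul_ne_zero hq.1 hr.1 (by rw [← Nat.cast_mul, hc, Nat.cast_mul, h, zero_mul])

lemma RatReducesTo.mul {q r : ℚ} {x y : α} (hq : RatReducesTo q x) (hr : RatReducesTo r y) :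
    RatReducesTo (q * r) (x * y) := by
  refine ⟨fun h => ?_, by rw [Rat.cast_mul_of_ne_zero hq.1 hr.1, hq.2, hr.2]⟩
  obtain ⟨c, hc⟩ := Rat.mul_den_dvd q r
  exact mul_ne_zero hq.1 hr.1 (by rw [← Nat.cast_mul, hc, Nat.cast_mul, h, zero_mul])

lemma ratReducesTo_sum {ι : Type*} {s : Finset ι} {q : ι → ℚ} {x : ι → α}
    (h : ∀ i ∈ s, RatReducesTo (q i) (x i)) : RatReducesTo (∑ i ∈ s, q i) (∑ i ∈ s, x i) := by
  classical
  induction s using Finset.induction_on with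
  | empty => simpa using ratReducesTo_zero
  | insert a s ha ih =>
    rw [sum_insert ha, sum_insert ha]
    exact (h a (mem_insert_self a s)).add (ih fun i hi => h i (mem_insert_of_mem hi))

lemma ratReducesTo_intCast_div_intCast {a b : ℤ} (hb : (b : α) ≠ 0) :
    RatReducesTo ((a : ℚ) / b) ((a : α) / b) := by
  have hden : ((a : ℚ) / b).den ≠ (0 : α) := by
    obtain ⟨c, hc⟩ := Rat.divInt_eq_div a b ▸ Rat.den_dvd a b
    exact fun h => hb (by rw [hc, Int.cast_mul, Int.cast_natCast, h, zero_mul])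
  exact ⟨hden, by rw [Rat.cast_div_of_ne_zero (by simp) (by simpa using hb)]; simp⟩

lemma PolyReducesTo.mul {f g : ℚ[X]} {F G : α[X]} (hf : PolyReducesTo f F)
    (hg : PolyReducesTo g G) : PolyReducesTo (f * g) (F * G) := fun k => by
  rw [coeff_mul, coeff_mul]
  exact ratReducesTo_sum fun ij _ => (hf ij.1).mul (hg ij.2)

lemma coeff_sum_range_C_mul_X_pow {R : Type*} [Semiring R] (c : ℕ → R) (n i : ℕ) :
    (∑ k ∈ range n, C (c k) * X ^ k).coeff i = if i < n then c i else 0 := by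
  simp

lemma polyReducesTo_sum_C_mul_X_pow {n : ℕ} {c : ℕ → ℚ} {d : ℕ → α}
    (h : ∀ k < n, RatReducesTo (c k) (d k)) :
    PolyReducesTo (∑ k ∈ range n, C (c k) * X ^ k) (∑ k ∈ range n, C (d k) * X ^ k) := by
  intro i
  rw [coeff_sum_range_C_mul_X_pow, coeff_sum_range_C_mul_X_pow]
  split_ifs with hi
  exacts [h i hi, ratReducesTo_zero]

end Reduction

lemma ascPochhammer_eval_intCast {R : Type*} [Ring R] (k : ℕ) (a : ℤ) :
    (ascPochhammer R k).eval (a : R) = (((ascPochhammer ℤ k).eval a : ℤ) : R) := by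
  rw [← ascPochhammer_map (Int.castRingHom R), eval_intCast_map, eq_intCast, Int.cast_id]

lemma ascPochhammer_eval_neg_natCast {R : Type*} [CommRing R] (m k : ℕ) :
    (ascPochhammer R k).eval (-(m : R)) = (-1) ^ k * (k ! * m.choose k : ℕ) := by
  rw [ascPochhammer_eval_neg_eq_descPochhammer, descPochhammer_eval_eq_descFactorial,
    Nat.descFactorial_eq_factorial_mul_choose]

def hassePoly (R : Type*) [CommRing R] (m : ℕ) : R[X] :=
  ∑ k ∈ range (m + 1), C ((m.choose k : R) ^ 2) * X ^ k

section Hypergeometric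

variable {p : ℕ} [Fact p.Prime]

def hypergeomCoef (a b c : ℚ) (k : ℕ) : ℚ :=
  poch a k * poch b k / (poch c k * k !)

lemma ratReducesTo_hypergeomCoef {a b c : ℤ} {m k : ℕ} (hk : k < p)
    (ha : (a : ZMod p) = -m) (hb : (b : ZMod p) = -m) (hc : (c : ZMod p) = 1) :
    RatReducesTo (hypergeomCoef a b c k) ((m.choose k : ZMod p) ^ 2) := by
  have hfac : (k ! : ZMod p) ≠ 0 := by
    rw [Ne, ZMod.natCast_eq_zero_iff, (Fact.out : p.Prime).dvd_factorial]
    omega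
  set A := (ascPochhammer ℤ k).eval
  have hden : ((A c * k ! : ℤ) : ZMod p) = (k ! : ZMod p) ^ 2 := by
    rw [Int.cast_mul, ← ascPochhammer_eval_intCast, hc, ascPochhammer_eval_one]
    push_cast; ring
  convert ratReducesTo_intCast_div_intCast (a := A a * A b) (hden ▸ pow_ne_zero 2 hfac) using 1
  · simp only [hypergeomCoef, poch, ascPochhammer_eval_intCast, A]
    push_cast; ring
  · rw [hden, Int.cast_mul, ← ascPochhammer_eval_intCast, ← ascPochhammer_eval_intCast, ha, hb,
      ascPochhammer_eval_neg_natCast]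
    push_cast
    field_simp
    rw [← pow_mul', Even.neg_one_pow (even_two_mul k), mul_one]

lemma ratReducesTo_Pcoef {m k : ℕ} (hp : p = 2 * m + 1) (hk : k < p) :
    RatReducesTo (Pcoef (2 * m) k) ((m.choose k : ZMod p) ^ 2) := by
  have hP : Pcoef (2 * m) k = hypergeomCoef (-m : ℤ) (m + 1 : ℤ) (-(2 * m) : ℤ) k := by
    simp only [Pcoef, hypergeomCoef]; push_cast; ring_nf
  have hzero : ((2 * m + 1 : ℕ) : ZMod p) = 0 := hp ▸ ZMod.natCast_self p
  push_cast at hzero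
  rw [hP]
  exact ratReducesTo_hypergeomCoef hk (by simp) (by push_cast; linear_combination hzero)
    (by push_cast; linear_combination -hzero)

lemma ratReducesTo_Qcoef {m k : ℕ} (hp : p = 2 * m + 1) (hk : k < p) :
    RatReducesTo (Qcoef (2 * m) k) ((m.choose k : ZMod p) ^ 2) := by
  have hQ : Qcoef (2 * m) k = hypergeomCoef (-m : ℤ) (-(3 * m) - 1 : ℤ) (-(2 * m) : ℤ) k := by
    simp only [Qcoef, hypergeomCoef]; push_cast; ring_nf
  have hzero : ((2 * m + 1 : ℕ) : ZMod p) = 0 := hp ▸ ZMod.natCast_self p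
  push_cast at hzero
  rw [hQ]
  exact ratReducesTo_hypergeomCoef hk (by simp) (by push_cast; linear_combination -hzero)
    (by push_cast; linear_combination -hzero)

lemma polyReducesTo_Ppoly {m : ℕ} (hp : p = 2 * m + 1) :
    PolyReducesTo (Ppoly (2 * m)) (hassePoly (ZMod p) m) := by
  rw [Ppoly, hassePoly, Nat.mul_div_cancel_left m two_pos]
  exact polyReducesTo_sum_C_mul_X_pow fun k hk => ratReducesTo_Pcoef hp (by omega)

lemma polyReducesTo_Qpoly {m : ℕ} (hp : p = 2 * m + 1) :
    PolyReducesTo (Qpoly (2 * m)) (hassePoly (ZMod p) m) := by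
  rw [Qpoly, hassePoly, Nat.mul_div_cancel_left m two_pos]
  exact polyReducesTo_sum_C_mul_X_pow fun k hk => ratReducesTo_Qcoef hp (by omega)

end Hypergeometric

lemma natDegree_hassePoly_le (R : Type*) [CommRing R] (m : ℕ) : (hassePoly R m).natDegree ≤ m :=
  natDegree_sum_le_of_forall_le _ _ fun k hk =>
    (natDegree_C_mul_X_pow_le _ k).trans (Nat.lt_succ_iff.mp (mem_range.mp hk))

lemma hassePoly_eval {R : Type*} [CommRing R] (m : ℕ) (z : R) :
    (hassePoly R m).eval z = ∑ k ∈ range (m + 1), (m.choose k : R) ^ 2 * z ^ k := by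
  simp [hassePoly, eval_finsetSum]

lemma coeff_legendre_pow {R : Type*} [CommRing R] (m : ℕ) (z : R) :
    ((X * (X - 1) * (X - C z)) ^ m).coeff (2 * m) = (-1) ^ m * (hassePoly R m).eval z := by
  have hfactor : (X * (X - 1) * (X - C z)) ^ m = ((X + C (-1)) ^ m * (X + C (-z)) ^ m) * X ^ m := by
    simp only [C_neg, C_1, ← sub_eq_add_neg, mul_pow]; ring
  rw [hfactor, two_mul, coeff_mul_X_pow, coeff_mul, Nat.sum_antidiagonal_eq_sum_range_succ_mk,
    hassePoly_eval, mul_sum]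
  refine sum_congr rfl fun i hi => ?_
  have him : i ≤ m := Nat.lt_succ_iff.mp (mem_range.mp hi)
  rw [coeff_X_add_C_pow, coeff_X_add_C_pow, Nat.sub_sub_self him, Nat.choose_symm him, neg_pow z,
    show (-1 : R) ^ m = (-1) ^ (m - i) * (-1) ^ i by rw [← pow_add, Nat.sub_add_cancel him]]
  ring

namespace FiniteField

variable {F : Type*} [Field F] [Fintype F]

lemma sum_pow_card_sub_one : ∑ x : F, x ^ (Fintype.card F - 1) = -1 := by
  classical
  have hq : Fintype.card F - 1 ≠ 0 := by have := Fintype.one_lt_card (α := F); omega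
  rw [← sum_erase_add _ _ (mem_univ 0), zero_pow hq, add_zero,
    sum_congr rfl fun x hx => pow_card_sub_one_eq_one x (ne_of_mem_erase hx), sum_const,
    card_erase_of_mem (mem_univ 0), card_univ, nsmul_one,
    Nat.cast_sub Fintype.card_pos, cast_card_eq_zero, zero_sub, Nat.cast_one]

lemma sum_pow_of_lt_two_mul {i : ℕ} (hi : i < 2 * (Fintype.card F - 1)) :
    ∑ x : F, x ^ i = if i = Fintype.card F - 1 then -1 else 0 := by
  set q := Fintype.card F
  rcases lt_trichotomy i (q - 1) with hlt | rfl | hgt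
  · rw [if_neg hlt.ne, sum_pow_lt_card_sub_one F i hlt]
  · rw [if_pos rfl, sum_pow_card_sub_one]
  · have hpow : ∀ x : F, x ^ i = x ^ (i - (q - 1)) := fun x => by
      rw [show i = (i - (q - 1) - 1) + q by omega, pow_add, pow_card, ← pow_succ]
      congr 1; omega
    rw [if_neg hgt.ne', sum_congr rfl fun x _ => hpow x, sum_pow_lt_card_sub_one F _ (by omega)]

lemma sum_eval_eq_neg_coeff (f : F[X]) (hf : f.natDegree < 2 * (Fintype.card F - 1)) :
    ∑ x : F, f.eval x = -f.coeff (Fintype.card F - 1) := by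
  set q := Fintype.card F
  have hq : 1 < q := Fintype.one_lt_card
  calc ∑ x : F, f.eval x
      = ∑ i ∈ range (2 * (q - 1)), f.coeff i * ∑ x : F, x ^ i := by
        simp_rw [eval_eq_sum_range' hf, mul_sum]; exact sum_comm
    _ = ∑ i ∈ range (2 * (q - 1)), if i = q - 1 then -f.coeff i else 0 := by
        refine sum_congr rfl fun i hi => ?_
        rw [sum_pow_of_lt_two_mul (mem_range.mp hi), mul_ite, mul_neg_one, mul_zero]
    _ = -f.coeff (q - 1) := by rw [sum_ite_eq', if_pos (mem_range.mpr (by omega))]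

lemma cast_card_sq_eq_sum_pow [DecidableEq F] (hF : ringChar F ≠ 2) (g : F → F) :
    (#{xy : F × F | xy.2 ^ 2 = g xy.1} : F) = ∑ x : F, (1 + g x ^ (Fintype.card F / 2)) := by
  rw [card_filter, Fintype.sum_prod_type, Nat.cast_sum]
  refine sum_congr rfl fun x _ => ?_
  have hsqrts := quadraticChar_card_sqrts hF (g x)
  rw [Set.toFinset_ofPred] at hsqrts
  rw [← card_filter, ← Int.cast_natCast, hsqrts, Int.cast_add, Int.cast_one,
    quadraticChar_eq_pow_of_char_ne_two' hF, add_comm]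

lemma cast_card_legendre [DecidableEq F] (hF : ringChar F ≠ 2) (z : F) :
    (#{xy : F × F | xy.2 ^ 2 = xy.1 * (xy.1 - 1) * (xy.1 - z)} : F) =
      -((-1) ^ (Fintype.card F / 2) * (hassePoly F (Fintype.card F / 2)).eval z) := by
  set m := Fintype.card F / 2
  have hq : Fintype.card F = 2 * m + 1 := by have := odd_card_of_char_ne_two hF; omega
  have hm : 0 < m := by have := Fintype.one_lt_card (α := F); omega
  have hdeg : ((X * (X - 1) * (X - C z)) ^ m).natDegree < 2 * (Fintype.card F - 1) := by
    have : ((X * (X - 1) * (X - C z)) ^ m).natDegree ≤ 3 * m := by compute_degree; omega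
    omega
  rw [cast_card_sq_eq_sum_pow hF (fun x => x * (x - 1) * (x - z)), sum_add_distrib, sum_const,
    card_univ, nsmul_one, cast_card_eq_zero, zero_add]
  have := sum_eval_eq_neg_coeff _ hdeg
  simp only [eval_pow, eval_mul, eval_sub, eval_X, eval_one, eval_C] at this
  rw [this, hq, Nat.add_sub_cancel, coeff_legendre_pow]

end FiniteField

lemma ratRed_eq_ratCast {p : ℕ} [Fact p.Prime] (q : ℚ) : ratRed p q = (q : ZMod p) := by
  rw [ratRed, Rat.cast_def, div_eq_mul_inv]

theorem stmt5 (p : ℕ) [Fact p.Prime] (hodd : p ≠ 2) (N : ℕ) (hN : N = p - 1) :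
    (∀ k : ℕ, ¬ p ∣ ((Ppoly N * Qpoly N).coeff k).den) ∧
    ∀ z : ZMod p, z ≠ 0 → z ≠ 1 →
      (∑ k ∈ Finset.range (N + 1), ratRed p ((Ppoly N * Qpoly N).coeff k) * z ^ k) =
        ((Finset.univ.filter
            (fun xy : ZMod p × ZMod p =>
              xy.2 ^ 2 = xy.1 * (xy.1 - 1) * (xy.1 - z))).card : ZMod p) ^ 2 := by
  obtain ⟨m, hpm⟩ : ∃ m, p = 2 * m + 1 :=
    ⟨p / 2, by have := (Fact.out : p.Prime).eq_two_or_odd; omega⟩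
  obtain rfl : N = 2 * m := by omega
  have hred := (polyReducesTo_Ppoly hpm).mul (polyReducesTo_Qpoly hpm)
  refine ⟨fun k => (ZMod.natCast_eq_zero_iff _ p).not.mp (hred k).1, fun z _ _ => ?_⟩
  set H := hassePoly (ZMod p) m
  have hdeg : (H * H).natDegree < 2 * m + 1 :=
    Nat.lt_succ_of_le (natDegree_mul_le.trans (by linarith [natDegree_hassePoly_le (ZMod p) m]))
  have hchar : ringChar (ZMod p) ≠ 2 := by rwa [ZMod.ringChar_zmod_n]
  have hm : Fintype.card (ZMod p) / 2 = m := by rw [ZMod.card]; omega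
  calc ∑ k ∈ range (2 * m + 1), ratRed p ((Ppoly (2 * m) * Qpoly (2 * m)).coeff k) * z ^ k
      = (H * H).eval z := by
        simp only [eval_eq_sum_range' hdeg, ratRed_eq_ratCast, (hred _).2]
    _ = (-((-1) ^ m * H.eval z)) ^ 2 := by
        rw [eval_mul, neg_sq, mul_pow, ← pow_mul', Even.neg_one_pow (even_two_mul m), one_mul, sq]
    _ = _ := by rw [FiniteField.cast_card_legendre hchar, hm]
end
end

section
/- Let N be a natural number, v ∈ ℂ^{N+1}, and z ∈ ℂ with |z| > 1. Then f(T_N v; z) = z^{2N+1}/(z−1)^{N+1} · f(v; 1 − 1/z) − ∑_{j=0}^N v_j · ∑_{k=N+1}^∞ binomial(j+k, j) z^{N−k}, where the inner series converges absolutely for |z| > 1. -/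
/-!
For `‖z‖ > 1` the negative binomial series gives
`∑_{n ≥ 0} C(j+n, j) z^(N-n) = z^N / (1 - 1/z)^(j+1) = z^(2N+1) / (z-1)^(N+1) · (1 - 1/z)^(N-j)`,
and its first `N + 1` terms are exactly the contribution of `v_j` to `f(T_N v; z)`.
Summing against `v_j` turns the closed forms into `f(v; 1 - 1/z)`, leaving the tails.
-/

noncomputable section

/-- The generating function `f(v; z) = ∑_{k=0}^N v_k z^{N-k}`. -/
def genFun {N : ℕ} (v : Fin (N + 1) → ℂ) (z : ℂ) : ℂ :=
  ∑ k : Fin (N + 1), v k * z ^ (N - (k : ℕ))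

open Finset

section Series

variable {𝕜 : Type*} [NormedField 𝕜] {z : 𝕜}

theorem hasSum_choose_mul_zpow (N j : ℕ) (hz : 1 < ‖z‖) :
    HasSum (fun n : ℕ => ((j + n).choose j : 𝕜) * z ^ ((N : ℤ) - n))
      (z ^ N / (1 - 1 / z) ^ (j + 1)) := by
  have hz0 : z ≠ 0 := norm_pos_iff.mp (one_pos.trans hz)
  have hr : ‖1 / z‖ < 1 := by rwa [norm_div, norm_one, div_lt_one (one_pos.trans hz)]
  have h := (hasSum_choose_mul_geometric_of_norm_lt_one j hr).mul_left (z ^ N)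
  rw [mul_one_div] at h
  refine h.congr_fun fun n => ?_
  rw [add_comm j n, zpow_sub₀ hz0, zpow_natCast, zpow_natCast, one_div, inv_pow]
  ring

theorem hasSum_choose_mul_zpow_tail (N j : ℕ) (hz : 1 < ‖z‖) :
    HasSum (fun k : ℕ => ((j + (N + 1 + k)).choose j : 𝕜) * z ^ ((N : ℤ) - ((N + 1 + k : ℕ) : ℤ)))
      (z ^ N / (1 - 1 / z) ^ (j + 1) -
        ∑ n ∈ range (N + 1), ((j + n).choose j : 𝕜) * z ^ ((N : ℤ) - n)) := by
  simp_rw [add_comm (N + 1)]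
  exact (hasSum_nat_add_iff' (N + 1)).mpr (hasSum_choose_mul_zpow N j hz)

end Series

theorem summable_norm_choose_mul_zpow {𝕜 : Type*} [RCLike 𝕜] {z : 𝕜} (N j : ℕ)
    (hz : 1 < ‖z‖) :
    Summable (fun n : ℕ => ‖((j + n).choose j : 𝕜) * z ^ ((N : ℤ) - n)‖) := by
  have hz' : 1 < ‖‖z‖‖ := by rwa [norm_norm]
  refine (hasSum_choose_mul_zpow N j hz').summable.congr fun n => ?_
  rw [norm_mul, norm_zpow, RCLike.norm_natCast]

theorem pow_div_sub_one_pow_mul_one_sub_one_div_pow {𝕜 : Type*} [Field 𝕜] {z : 𝕜} (hz0 : z ≠ 0)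
    (hz1 : z ≠ 1) {N j : ℕ} (hj : j ≤ N) :
    z ^ (2 * N + 1) / (z - 1) ^ (N + 1) * (1 - 1 / z) ^ (N - j) =
      z ^ N / (1 - 1 / z) ^ (j + 1) := by
  obtain ⟨m, rfl⟩ := Nat.exists_eq_add_of_le hj
  have hz1' : z - 1 ≠ 0 := sub_ne_zero.mpr hz1
  rw [Nat.add_sub_cancel_left, one_sub_div hz0, div_pow, div_pow]
  field_simp
  ring

variable {N : ℕ}

theorem genFun_pascalMatrix_mulVec (v : Fin (N + 1) → ℂ) (z : ℂ) :
    genFun ((pascalMatrix ℂ N).mulVec v) z =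
      ∑ j : Fin (N + 1), v j *
        ∑ n ∈ range (N + 1), (((j : ℕ) + n).choose j : ℂ) * z ^ ((N : ℤ) - n) := by
  simp only [genFun, Matrix.mulVec, dotProduct, pascalMatrix, sum_mul, mul_sum]
  rw [sum_comm]
  refine sum_congr rfl fun j _ => ?_
  rw [← Fin.sum_univ_eq_sum_range]
  refine sum_congr rfl fun k _ => ?_
  rw [Nat.choose_symm_add, add_comm (k : ℕ), ← zpow_natCast,
    Nat.cast_sub (Nat.lt_succ_iff.mp k.isLt)]
  ring

theorem genFun_one_sub_one_div (v : Fin (N + 1) → ℂ) {z : ℂ} (hz0 : z ≠ 0) (hz1 : z ≠ 1) :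
    z ^ (2 * N + 1) / (z - 1) ^ (N + 1) * genFun v (1 - 1 / z) =
      ∑ j : Fin (N + 1), v j * (z ^ N / (1 - 1 / z) ^ ((j : ℕ) + 1)) := by
  rw [genFun, mul_sum]
  refine sum_congr rfl fun j _ => ?_
  rw [← pow_div_sub_one_pow_mul_one_sub_one_div_pow hz0 hz1 (Nat.lt_succ_iff.mp j.isLt)]
  ring

theorem stmt6 (N : ℕ) (v : Fin (N + 1) → ℂ) (z : ℂ) (hz : 1 < ‖z‖) :
    (∀ j : Fin (N + 1), Summable (fun k : ℕ =>
      ‖(((j : ℕ) + (N + 1 + k)).choose (j : ℕ) : ℂ) * z ^ ((N : ℤ) - ((N + 1 + k : ℕ) : ℤ))‖)) ∧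
    genFun ((pascalMatrix ℂ N).mulVec v) z =
      z ^ (2 * N + 1) / (z - 1) ^ (N + 1) * genFun v (1 - 1 / z)
      - ∑ j : Fin (N + 1), v j *
          ∑' k : ℕ, (((j : ℕ) + (N + 1 + k)).choose (j : ℕ) : ℂ) *
            z ^ ((N : ℤ) - ((N + 1 + k : ℕ) : ℤ)) := by
  have hz0 : z ≠ 0 := norm_pos_iff.mp (one_pos.trans hz)
  have hz1 : z ≠ 1 := by rintro rfl; simp at hz
  refine ⟨fun j => ?_, ?_⟩
  · refine ((summable_nat_add_iff (N + 1)).mpr (summable_norm_choose_mul_zpow N j hz)).congr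
      fun k => ?_
    rw [add_comm k]
  · simp_rw [genFun_pascalMatrix_mulVec, genFun_one_sub_one_div v hz0 hz1,
      (hasSum_choose_mul_zpow_tail N _ hz).tsum_eq, ← sum_sub_distrib]
    refine sum_congr rfl fun j _ => ?_
    ring
end
end

section
/- Let U ⊆ ℂ be an open set and let v_0, v_1 : U → ℂ be differentiable functions. Suppose f, g : U → ℂ are twice differentiable and satisfy f'' + v_1 f' + v_0 f = 0 and g'' + v_1 g' + v_0 g = 0 on U. Then the product h = f·g is three times differentiable on U and satisfies h''' + 3v_1 h'' + (4v_0 + v_1' + 2v_1²) h' + (2v_0' + 4v_0 v_1) h = 0 on U. -/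
open Filter

/-- If `f'' + v1 f' + v0 f = 0` on an open set, then `f''` has a derivative
`-(v1' f' + v1 f'' + v0' f + v0 f')` at each point of the set. -/
lemma aux_third_deriv (U : Set ℂ) (hU : IsOpen U) (v0 v1 f : ℂ → ℂ)
    (hv0 : ∀ z ∈ U, DifferentiableAt ℂ v0 z)
    (hv1 : ∀ z ∈ U, DifferentiableAt ℂ v1 z)
    (hf1 : ∀ z ∈ U, DifferentiableAt ℂ f z)
    (hf2 : ∀ z ∈ U, DifferentiableAt ℂ (deriv f) z)
    (hfeq : ∀ z ∈ U, deriv (deriv f) z + v1 z * deriv f z + v0 z * f z = 0) :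
    ∀ z ∈ U, HasDerivAt (deriv (deriv f))
      (-(deriv v1 z * deriv f z + v1 z * deriv (deriv f) z
        + (deriv v0 z * f z + v0 z * deriv f z))) z := by
  intro z hz
  have hev : deriv (deriv f) =ᶠ[nhds z] fun w => -(v1 w * deriv f w + v0 w * f w) :=
    eventuallyEq_of_mem (hU.mem_nhds hz) (fun w hw => by
      linear_combination hfeq w hw)
  have hE : HasDerivAt (fun w => -(v1 w * deriv f w + v0 w * f w))
      (-((deriv v1 z * deriv f z + v1 z * deriv (deriv f) z)
        + (deriv v0 z * f z + v0 z * deriv f z))) z :=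
    (((hv1 z hz).hasDerivAt.mul (hf2 z hz).hasDerivAt).add
      ((hv0 z hz).hasDerivAt.mul (hf1 z hz).hasDerivAt)).neg
  exact hE.congr_of_eventuallyEq hev

theorem stmt11 (U : Set ℂ) (hU : IsOpen U) (v0 v1 f g : ℂ → ℂ)
    (hv0 : ∀ z ∈ U, DifferentiableAt ℂ v0 z)
    (hv1 : ∀ z ∈ U, DifferentiableAt ℂ v1 z)
    (hf1 : ∀ z ∈ U, DifferentiableAt ℂ f z)
    (hf2 : ∀ z ∈ U, DifferentiableAt ℂ (deriv f) z)
    (hg1 : ∀ z ∈ U, DifferentiableAt ℂ g z)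
    (hg2 : ∀ z ∈ U, DifferentiableAt ℂ (deriv g) z)
    (hfeq : ∀ z ∈ U, deriv (deriv f) z + v1 z * deriv f z + v0 z * f z = 0)
    (hgeq : ∀ z ∈ U, deriv (deriv g) z + v1 z * deriv g z + v0 z * g z = 0) :
    (∀ z ∈ U, DifferentiableAt ℂ (f * g) z ∧
      DifferentiableAt ℂ (deriv (f * g)) z ∧
      DifferentiableAt ℂ (deriv (deriv (f * g))) z) ∧
    ∀ z ∈ U,
      deriv (deriv (deriv (f * g))) z + 3 * v1 z * deriv (deriv (f * g)) z
        + (4 * v0 z + deriv v1 z + 2 * (v1 z) ^ 2) * deriv (f * g) z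
        + (2 * deriv v0 z + 4 * v0 z * v1 z) * (f * g) z = 0 := by
  have HF3 := aux_third_deriv U hU v0 v1 f hv0 hv1 hf1 hf2 hfeq
  have HG3 := aux_third_deriv U hU v0 v1 g hv0 hv1 hg1 hg2 hgeq
  -- first derivative of the product
  have Hh1 : ∀ w ∈ U, HasDerivAt (f * g) (deriv f w * g w + f w * deriv g w) w := by
    intro w hw
    exact (hf1 w hw).hasDerivAt.mul (hg1 w hw).hasDerivAt
  have hD1 : ∀ w ∈ U, deriv (f * g) w = deriv f w * g w + f w * deriv g w :=
    fun w hw => (Hh1 w hw).deriv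
  -- second derivative of the product
  have Hh2 : ∀ w ∈ U, HasDerivAt (deriv (f * g))
      ((deriv (deriv f) w * g w + deriv f w * deriv g w)
        + (deriv f w * deriv g w + f w * deriv (deriv g) w)) w := by
    intro w hw
    exact (((hf2 w hw).hasDerivAt.mul (hg1 w hw).hasDerivAt).add
      ((hf1 w hw).hasDerivAt.mul (hg2 w hw).hasDerivAt)).congr_of_eventuallyEq
      (eventuallyEq_of_mem (hU.mem_nhds hw) hD1)
  have hD2 : ∀ w ∈ U, deriv (deriv (f * g)) w
      = (deriv (deriv f) w * g w + deriv f w * deriv g w)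
        + (deriv f w * deriv g w + f w * deriv (deriv g) w) :=
    fun w hw => (Hh2 w hw).deriv
  -- third derivative of the product
  have Hh3 : ∀ w ∈ U, HasDerivAt (deriv (deriv (f * g)))
      (((-(deriv v1 w * deriv f w + v1 w * deriv (deriv f) w
          + (deriv v0 w * f w + v0 w * deriv f w)) * g w + deriv (deriv f) w * deriv g w)
        + (deriv (deriv f) w * deriv g w + deriv f w * deriv (deriv g) w))
        + ((deriv (deriv f) w * deriv g w + deriv f w * deriv (deriv g) w)
        + (deriv f w * deriv (deriv g) w
          + f w * -(deriv v1 w * deriv g w + v1 w * deriv (deriv g) w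
          + (deriv v0 w * g w + v0 w * deriv g w))))) w := by
    intro w hw
    exact ((((HF3 w hw).mul (hg1 w hw).hasDerivAt).add
      ((hf2 w hw).hasDerivAt.mul (hg2 w hw).hasDerivAt)).add
      (((hf2 w hw).hasDerivAt.mul (hg2 w hw).hasDerivAt).add
      ((hf1 w hw).hasDerivAt.mul (HG3 w hw)))).congr_of_eventuallyEq
      (eventuallyEq_of_mem (hU.mem_nhds hw) hD2)
  constructor
  · intro z hz
    exact ⟨(hf1 z hz).mul (hg1 z hz), (Hh2 z hz).differentiableAt,
      (Hh3 z hz).differentiableAt⟩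
  · intro z hz
    have e1 := hD1 z hz
    have e2 := hD2 z hz
    have e3 := (Hh3 z hz).deriv
    have epm : (f * g) z = f z * g z := rfl
    rw [e1, e2, e3, epm]
    linear_combination (3 * deriv g z + 2 * v1 z * g z) * hfeq z hz
      + (3 * deriv f z + 2 * v1 z * f z) * hgeq z hz
end

section
/- Let N be a positive even integer. Then the identity of polynomials Q_N(z) = P_N(z)·(1−z)^{N+1} + (−1)^{N/2}·P_N(1−z)·z^{N+1} holds in ℚ[z]. -/
open Polynomial Finset

noncomputable section

namespace Stmt14Aux

/-! ### Pochhammer basics -/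

lemma poch_zero (q : ℚ) : poch q 0 = 1 := by simp [poch]

lemma poch_succ (q : ℚ) (k : ℕ) : poch q (k+1) = poch q k * (q + k) := by
  simp [poch, ascPochhammer_succ_right]

lemma poch_ne_zero {q : ℚ} {k : ℕ} (h : ∀ i < k, q + i ≠ 0) : poch q k ≠ 0 := by
  induction k with
  | zero => simp [poch_zero]
  | succ k ih =>
    rw [poch_succ]
    exact mul_ne_zero (ih fun i hi => h i (by omega)) (h k (by omega))

lemma poch_neg_two_n_ne_zero {n k : ℕ} (hk : k ≤ 2*n) : poch (-(2*(n:ℚ))) k ≠ 0 := by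
  apply poch_ne_zero
  intro i hi
  have h1 : (i:ℚ) ≠ 2*n := by
    have : i ≠ 2*n := by omega
    exact_mod_cast fun h => this (by exact_mod_cast h)
  intro h
  apply h1
  linarith

/-! ### The hypergeometric differential operators -/

def LQop (n : ℕ) (y : ℚ[X]) : ℚ[X] :=
  X * derivative (derivative y) - X * (X * derivative (derivative y))
    + C (4*(n:ℚ)) * (X * derivative y) - C (2*(n:ℚ)) * derivative y
    - C ((n:ℚ)*(3*n+1)) * y

def LPop (n : ℕ) (y : ℚ[X]) : ℚ[X] :=
  X * derivative (derivative y) - X * (X * derivative (derivative y))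
    - C (2*(n:ℚ)) * derivative y - C (2:ℚ) * (X * derivative y)
    + C ((n:ℚ)*(n+1)) * y

def L1op (n : ℕ) (y : ℚ[X]) : ℚ[X] :=
  X * derivative (derivative y) - X * (X * derivative (derivative y))
    + C (2*(n:ℚ)+2) * derivative y - C (2:ℚ) * (X * derivative y)
    + C ((n:ℚ)*(n+1)) * y

lemma coeff_LQop (n : ℕ) (y : ℚ[X]) (k : ℕ) :
    (LQop n y).coeff k = ((k:ℚ)+1)*((k:ℚ)-2*n) * y.coeff (k+1)
      - ((k:ℚ)-n)*((k:ℚ)-3*n-1) * y.coeff k := by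
  match k with
  | 0 =>
    simp only [LQop, coeff_add, coeff_sub, coeff_C_mul, mul_coeff_zero, coeff_X_zero,
      zero_mul, coeff_derivative, coeff_C_zero]
    push_cast; ring
  | 1 =>
    simp only [LQop, coeff_add, coeff_sub, coeff_C_mul, coeff_X_mul, mul_coeff_zero,
      coeff_X_zero, zero_mul, coeff_derivative]
    push_cast; ring
  | (k+2) =>
    simp only [LQop, coeff_add, coeff_sub, coeff_C_mul, coeff_X_mul, coeff_derivative]
    push_cast; ring

lemma coeff_LPop (n : ℕ) (y : ℚ[X]) (k : ℕ) :
    (LPop n y).coeff k = ((k:ℚ)+1)*((k:ℚ)-2*n) * y.coeff (k+1)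
      - ((k:ℚ)-n)*((k:ℚ)+n+1) * y.coeff k := by
  match k with
  | 0 =>
    simp only [LPop, coeff_add, coeff_sub, coeff_C_mul, mul_coeff_zero, coeff_X_zero,
      zero_mul, coeff_derivative, coeff_C_zero, coeff_ofNat_zero]
    push_cast; ring
  | 1 =>
    simp only [LPop, coeff_add, coeff_sub, coeff_C_mul, coeff_X_mul, mul_coeff_zero,
      coeff_X_zero, zero_mul, coeff_derivative, coeff_ofNat_zero]
    push_cast; ring
  | (k+2) =>
    simp only [LPop, coeff_add, coeff_sub, coeff_C_mul, coeff_X_mul, coeff_derivative]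
    push_cast; ring

lemma LQop_sub (n : ℕ) (y z : ℚ[X]) : LQop n (y - z) = LQop n y - LQop n z := by
  simp only [LQop, derivative_sub]; ring

lemma LQop_Cmul (n : ℕ) (a : ℚ) (y : ℚ[X]) : LQop n (C a * y) = C a * LQop n y := by
  simp only [LQop, derivative_C_mul]; ring

lemma L1op_comp (n : ℕ) (y : ℚ[X]) :
    L1op n (y.comp (1 - X)) = (LPop n y).comp (1 - X) := by
  have h : ∀ p : ℚ[X], derivative (p.comp (1 - X)) = -(derivative p).comp (1 - X) := by
    intro p; rw [derivative_comp]; simp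
  simp only [L1op, LPop, h, derivative_neg, neg_neg, sub_comp, add_comp, mul_comp, C_comp,
    X_comp, one_comp, natCast_comp, ofNat_comp, map_ofNat, map_natCast, map_add, map_mul, map_one]
  push_cast
  ring

lemma LQop_one_sub_X_pow_mul (n : ℕ) (hn : 1 ≤ n) (y : ℚ[X]) :
    LQop n ((1 - X)^(2*n+1) * y) = (1 - X)^(2*n+1) * LPop n y := by
  have e2 : (1-X:ℚ[X])^(2*n) = (1-X)^(2*n-1) * (1-X) := by
    rw [← pow_succ]; congr 1; omega
  have e3 : (1-X:ℚ[X])^(2*n+1) = (1-X)^(2*n-1) * (1-X)^2 := by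
    rw [← pow_add]; congr 1; omega
  have d1 : derivative ((1-X:ℚ[X])^(2*n+1)) = -((2*n+1:ℕ):ℚ[X]) * (1-X)^(2*n) := by
    rw [derivative_pow, show 2*n+1-1 = 2*n from rfl]
    simp only [derivative_sub, derivative_one, derivative_X, zero_sub, map_natCast]
    ring
  have d2 : derivative ((1-X:ℚ[X])^(2*n)) = -((2*n:ℕ):ℚ[X]) * (1-X)^(2*n-1) := by
    rw [derivative_pow]
    simp only [derivative_sub, derivative_one, derivative_X, zero_sub, map_natCast]
    ring
  simp only [LQop, LPop, derivative_mul, derivative_add, derivative_sub, d1, d2,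
    derivative_neg, derivative_natCast, neg_mul, zero_mul, zero_add, add_zero, mul_zero,
    neg_zero, neg_neg]
  simp only [e2, e3, map_ofNat, map_natCast, map_add, map_mul, map_one]
  push_cast
  ring

lemma LQop_X_pow_mul (n : ℕ) (hn : 1 ≤ n) (u : ℚ[X]) :
    LQop n (X^(2*n+1) * u) = X^(2*n+1) * L1op n u := by
  have e2 : (X:ℚ[X])^(2*n) = X^(2*n-1) * X := by rw [← pow_succ]; congr 1; omega
  have e3 : (X:ℚ[X])^(2*n+1) = X^(2*n-1) * X^2 := by rw [← pow_add]; congr 1; omega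
  have d1 : derivative ((X:ℚ[X])^(2*n+1)) = ((2*n+1:ℕ):ℚ[X]) * X^(2*n) := by
    rw [derivative_pow]
    simp only [derivative_X, mul_one, map_natCast]
    rw [show 2*n+1-1 = 2*n from rfl]
  have d2 : derivative ((X:ℚ[X])^(2*n)) = ((2*n:ℕ):ℚ[X]) * X^(2*n-1) := by
    rw [derivative_pow]
    simp only [derivative_X, mul_one, map_natCast]
  simp only [LQop, L1op, derivative_mul, derivative_add, derivative_sub, d1, d2,
    derivative_neg, derivative_natCast, neg_mul, zero_mul, zero_add, add_zero, mul_zero,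
    neg_zero]
  simp only [e2, e3, map_ofNat, map_natCast, map_add, map_mul, map_one]
  push_cast
  ring

/-! ### Coefficients of `Ppoly` and `Qpoly`, and the recurrences -/

lemma coeff_Ppoly (N k : ℕ) :
    (Ppoly N).coeff k = if k < N / 2 + 1 then Pcoef N k else 0 := by
  simp [Ppoly, finset_sum_coeff, coeff_C_mul, coeff_X_pow, eq_comm (a := k)]

lemma coeff_Qpoly (N k : ℕ) :
    (Qpoly N).coeff k = if k < N / 2 + 1 then Qcoef N k else 0 := by
  simp [Qpoly, finset_sum_coeff, coeff_C_mul, coeff_X_pow, eq_comm (a := k)]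

lemma cast_half (n : ℕ) : -(((2*n:ℕ)):ℚ)/2 = -(n:ℚ) := by push_cast; ring
lemma cast_half' (n : ℕ) : (((2*n:ℕ)):ℚ)/2 + 1 = (n:ℚ)+1 := by push_cast; ring
lemma cast_3 (n : ℕ) : -(3*((2*n:ℕ):ℚ))/2 - 1 = -(3*(n:ℚ))-1 := by push_cast; ring
lemma cast_2 (n : ℕ) : -(((2*n:ℕ)):ℚ) = -(2*(n:ℚ)) := by push_cast; ring

lemma Qrec (n k : ℕ) :
    ((k:ℚ)+1)*((k:ℚ)-2*n) * (Qpoly (2*n)).coeff (k+1)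
      = ((k:ℚ)-n)*((k:ℚ)-3*n-1) * (Qpoly (2*n)).coeff k := by
  have h2 : (2*n)/2 = n := by omega
  rw [coeff_Qpoly, coeff_Qpoly, h2]
  rcases lt_trichotomy k n with hk | hk | hk
  · rw [if_pos (by omega), if_pos (by omega)]
    unfold Qcoef
    rw [cast_half, cast_3, cast_2, poch_succ, poch_succ, poch_succ, Nat.factorial_succ]
    have hC : poch (-(2*(n:ℚ))) k ≠ 0 := poch_neg_two_n_ne_zero (by omega)
    have hc2 : -(2*(n:ℚ)) + k ≠ 0 := by
      have : (k:ℚ) ≠ 2*n := by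
        have h' : k ≠ 2*n := by omega
        exact_mod_cast fun h => h' (by exact_mod_cast h)
      intro h; apply this; linarith
    have hF : ((Nat.factorial k : ℕ):ℚ) ≠ 0 := by
      exact_mod_cast (Nat.factorial_pos k).ne'
    have hk1 : ((k:ℚ)+1) ≠ 0 := by positivity
    push_cast
    field_simp
    ring
  · subst hk
    rw [if_neg (by omega)]
    simp
  · rw [if_neg (by omega), if_neg (by omega)]
    simp

lemma Prec (n k : ℕ) :
    ((k:ℚ)+1)*((k:ℚ)-2*n) * (Ppoly (2*n)).coeff (k+1)
      = ((k:ℚ)-n)*((k:ℚ)+n+1) * (Ppoly (2*n)).coeff k := by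
  have h2 : (2*n)/2 = n := by omega
  rw [coeff_Ppoly, coeff_Ppoly, h2]
  rcases lt_trichotomy k n with hk | hk | hk
  · rw [if_pos (by omega), if_pos (by omega)]
    unfold Pcoef
    rw [cast_half, cast_half', cast_2, poch_succ, poch_succ, poch_succ, Nat.factorial_succ]
    have hC : poch (-(2*(n:ℚ))) k ≠ 0 := poch_neg_two_n_ne_zero (by omega)
    have hc2 : -(2*(n:ℚ)) + k ≠ 0 := by
      have : (k:ℚ) ≠ 2*n := by
        have h' : k ≠ 2*n := by omega
        exact_mod_cast fun h => h' (by exact_mod_cast h)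
      intro h; apply this; linarith
    have hF : ((Nat.factorial k : ℕ):ℚ) ≠ 0 := by
      exact_mod_cast (Nat.factorial_pos k).ne'
    have hk1 : ((k:ℚ)+1) ≠ 0 := by positivity
    push_cast
    field_simp
    ring
  · subst hk
    rw [if_neg (by omega)]
    simp
  · rw [if_neg (by omega), if_neg (by omega)]
    simp

lemma LQop_Qpoly (n : ℕ) : LQop n (Qpoly (2*n)) = 0 := by
  ext k
  rw [coeff_LQop, coeff_zero, sub_eq_zero, Qrec]

lemma LPop_Ppoly (n : ℕ) : LPop n (Ppoly (2*n)) = 0 := by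
  ext k
  rw [coeff_LPop, coeff_zero, sub_eq_zero, Prec]

lemma coeff_one_sub_X_pow (M k : ℕ) :
    ((1 - X : ℚ[X])^M).coeff k = (-1:ℚ)^k * (M.choose k) := by
  have h : (1 - X : ℚ[X])^M = C ((-1:ℚ)^M) * (X + C (-1))^M := by
    rw [map_pow, ← mul_pow]; congr 1; simp; ring
  rw [h, coeff_C_mul, coeff_X_add_C_pow]
  rcases le_or_gt k M with hk | hk
  · have h2 : (-1:ℚ)^M * (-1:ℚ)^(M-k) = (-1)^k := by
      rw [← pow_add, show M + (M-k) = 2*(M-k)+k by omega, pow_add, pow_mul]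
      simp
    rw [← mul_assoc, h2]
  · rw [Nat.choose_eq_zero_of_lt hk]
    simp

lemma A_top (n : ℕ) :
    (Ppoly (2*n) * (1-X)^(2*n+1)).coeff (3*n+1) = -Pcoef (2*n) n := by
  rw [coeff_mul, Finset.Nat.sum_antidiagonal_eq_sum_range_succ_mk]
  rw [Finset.sum_eq_single n]
  · rw [coeff_Ppoly, if_pos (by omega), coeff_one_sub_X_pow,
      show 3*n+1-n = 2*n+1 by omega, Nat.choose_self]
    have h1 : (-1:ℚ)^(2*n+1) = -1 := by
      rw [pow_succ, pow_mul]; simp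
    rw [h1]; ring
  · intro b hb hbn
    rcases lt_or_gt_of_ne hbn with h | h
    · rw [coeff_one_sub_X_pow, Nat.choose_eq_zero_of_lt (by omega)]; simp
    · rw [coeff_Ppoly, if_neg (by omega)]; simp
  · intro h; exact absurd (Finset.mem_range.mpr (by omega)) h

lemma comp_coeff (n : ℕ) :
    ((Ppoly (2*n)).comp (1-X)).coeff n = (-1:ℚ)^n * Pcoef (2*n) n := by
  rw [Ppoly, show (2*n)/2 = n by omega]
  have hcomp : (∑ k ∈ Finset.range (n+1), C (Pcoef (2*n) k) * X ^ k).comp ((1:ℚ[X])-X)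
      = ∑ k ∈ Finset.range (n+1), C (Pcoef (2*n) k) * ((1:ℚ[X])-X) ^ k := by
    simp [Polynomial.comp, eval₂_finset_sum]
  rw [hcomp]
  rw [finset_sum_coeff]
  rw [Finset.sum_eq_single n]
  · rw [coeff_C_mul, coeff_one_sub_X_pow, Nat.choose_self]
    ring
  · intro b hb hbn
    have hb' : b < n := by
      have := Finset.mem_range.mp hb; omega
    rw [coeff_C_mul, coeff_one_sub_X_pow, Nat.choose_eq_zero_of_lt hb']
    simp
  · intro h; exact absurd (Finset.mem_range.mpr (by omega)) h

lemma LQop_add (n : ℕ) (y z : ℚ[X]) : LQop n (y + z) = LQop n y + LQop n z := by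
  simp only [LQop, derivative_add]; ring

lemma uniqueness (n : ℕ) (hn : 1 ≤ n) (D : ℚ[X]) (hD : LQop n D = 0)
    (h0 : D.coeff 0 = 0) (htop : D.coeff (3*n+1) = 0) : D = 0 := by
  have hrec : ∀ k : ℕ, ((k:ℚ)+1)*((k:ℚ)-2*n) * D.coeff (k+1)
      = ((k:ℚ)-n)*((k:ℚ)-3*n-1) * D.coeff k := by
    intro k
    have h := congrArg (fun p : ℚ[X] => p.coeff k) hD
    simp only [coeff_zero] at h
    rw [coeff_LQop] at h
    linarith [h]
  have hup : ∀ k, k ≤ 2*n → D.coeff k = 0 := by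
    intro k
    induction k with
    | zero => intro _; exact h0
    | succ k ih =>
      intro hk
      have h1 := hrec k
      rw [ih (by omega), mul_zero] at h1
      have hne : ((k:ℚ)+1)*((k:ℚ)-2*n) ≠ 0 := by
        apply mul_ne_zero
        · positivity
        · have hkn : (k:ℚ) ≠ 2*n := by
            have h' : k ≠ 2*n := by omega
            exact_mod_cast fun hh => h' (by exact_mod_cast hh)
          intro hh; exact hkn (by linarith)
      rcases mul_eq_zero.mp h1 with h | h
      · exact absurd h hne
      · exact h
  have hdown : ∀ j, j ≤ n → D.coeff (3*n+1-j) = 0 := by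
    intro j
    induction j with
    | zero => intro _; simpa using htop
    | succ j ih =>
      intro hj
      have hk1 : 3*n+1-j = (3*n-j) + 1 := by omega
      have hz : D.coeff ((3*n-j)+1) = 0 := by rw [← hk1]; exact ih (by omega)
      have h1 := hrec (3*n-j)
      rw [hz, mul_zero] at h1
      have hc : ((3*n-j : ℕ):ℚ) = 3*(n:ℚ) - j := by
        have := Nat.cast_sub (R := ℚ) (show j ≤ 3*n by omega)
        push_cast at this ⊢
        linarith [this]
      rw [hc] at h1
      have hj' : (j:ℚ) + 1 ≤ n := by exact_mod_cast hj
      have hj0 : (0:ℚ) ≤ j := Nat.cast_nonneg j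
      have hne : (3*(n:ℚ)-j-n)*(3*(n:ℚ)-j-3*n-1) ≠ 0 := by
        apply mul_ne_zero
        · have : (0:ℚ) < 3*(n:ℚ)-j-n := by linarith
          exact this.ne'
        · have : 3*(n:ℚ)-j-3*n-1 < 0 := by linarith
          exact this.ne
      have hD0 : D.coeff (3*n-j) = 0 := by
        rcases mul_eq_zero.mp h1.symm with h | h
        · exact absurd h hne
        · exact h
      rw [show 3*n+1-(j+1) = 3*n-j by omega]
      exact hD0
  have hup2 : ∀ k, 2*n+1 ≤ k → D.coeff k = 0 := by
    intro k hk
    induction k, hk using Nat.le_induction with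
    | base =>
      have := hdown n (le_refl n)
      rwa [show 3*n+1-n = 2*n+1 by omega] at this
    | succ k hk ih =>
      have h1 := hrec k
      rw [ih, mul_zero] at h1
      have hne : ((k:ℚ)+1)*((k:ℚ)-2*n) ≠ 0 := by
        apply mul_ne_zero
        · positivity
        · have hkn : (k:ℚ) ≠ 2*n := by
            have h' : k ≠ 2*n := by omega
            exact_mod_cast fun hh => h' (by exact_mod_cast hh)
          intro hh; exact hkn (by linarith)
      rcases mul_eq_zero.mp h1 with h | h
      · exact absurd h hne
      · exact h
  ext k
  rw [coeff_zero]
  rcases le_or_gt k (2*n) with hk | hk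
  · exact hup k hk
  · exact hup2 k (by omega)

end Stmt14Aux

open Stmt14Aux in
theorem stmt14 (N : ℕ) (hN : 0 < N) (heven : Even N) :
    Qpoly N = Ppoly N * (1 - X) ^ (N + 1)
      + C ((-1 : ℚ) ^ (N / 2)) * (Ppoly N).comp (1 - X) * X ^ (N + 1) := by
  obtain ⟨n, rfl⟩ : ∃ n, N = 2*n := by
    obtain ⟨m, hm⟩ := heven
    exact ⟨m, by omega⟩
  have hn : 1 ≤ n := by omega
  rw [show (2*n)/2 = n by omega, show 2*n+1 = 2*n+1 from rfl]
  set A : ℚ[X] := Ppoly (2*n) * (1-X)^(2*n+1) with hA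
  set B : ℚ[X] := C ((-1:ℚ)^n) * (Ppoly (2*n)).comp (1-X) * X^(2*n+1) with hB
  have hLQA : LQop n A = 0 := by
    rw [hA, mul_comm, LQop_one_sub_X_pow_mul n hn, LPop_Ppoly, mul_zero]
  have hLQB : LQop n B = 0 := by
    have hB' : B = C ((-1:ℚ)^n) * (X^(2*n+1) * (Ppoly (2*n)).comp (1-X)) := by
      rw [hB]; ring
    rw [hB', LQop_Cmul, LQop_X_pow_mul n hn, L1op_comp, LPop_Ppoly, zero_comp,
      mul_zero, mul_zero]
  have hP0 : (Ppoly (2*n)).coeff 0 = 1 := by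
    rw [coeff_Ppoly, if_pos (by omega)]
    simp [Pcoef, poch_zero]
  have hQ0 : (Qpoly (2*n)).coeff 0 = 1 := by
    rw [coeff_Qpoly, if_pos (by omega)]
    simp [Qcoef, poch_zero]
  have hc0 : (Qpoly (2*n) - (A + B)).coeff 0 = 0 := by
    rw [coeff_sub, coeff_add, hQ0]
    have hA0 : A.coeff 0 = 1 := by
      rw [hA, mul_coeff_zero, hP0, coeff_one_sub_X_pow]
      simp
    have hB0 : B.coeff 0 = 0 := by
      rw [hB, mul_coeff_zero, coeff_X_pow]
      simp
    rw [hA0, hB0]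
    ring
  have hctop : (Qpoly (2*n) - (A + B)).coeff (3*n+1) = 0 := by
    rw [coeff_sub, coeff_add]
    have hQtop : (Qpoly (2*n)).coeff (3*n+1) = 0 := by
      rw [coeff_Qpoly, if_neg (by omega)]
    have hAtop : A.coeff (3*n+1) = -Pcoef (2*n) n := A_top n
    have hBtop : B.coeff (3*n+1) = Pcoef (2*n) n := by
      rw [hB, mul_assoc, coeff_C_mul, coeff_mul_X_pow', if_pos (by omega : 2*n+1 ≤ 3*n+1),
        show 3*n+1-(2*n+1) = n by omega, comp_coeff]
      rw [← mul_assoc, ← pow_add, show n + n = 2*n by omega, pow_mul]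
      simp
    rw [hQtop, hAtop, hBtop]
    ring
  have hD : LQop n (Qpoly (2*n) - (A + B)) = 0 := by
    rw [LQop_sub, LQop_add, hLQA, hLQB, LQop_Qpoly]
    ring
  have := uniqueness n hn _ hD hc0 hctop
  exact sub_eq_zero.mp this
end
end

section
/- Let N be a positive even integer. Then the degree-N/2 polynomial P_N is palindromic: its coefficients c_k = (−N/2)_k (N/2+1)_k / ((−N)_k · k!) satisfy c_k = c_{N/2−k} for all 0 ≤ k ≤ N/2; equivalently, z^{N/2} P_N(1/z) = P_N(z) for all z ≠ 0. -/
open Polynomial Finset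

noncomputable section

/-!
For `N = 2m` and `k ≤ m`, the Pochhammer symbols at the integers `-m`, `m + 1`, `-2m` are ratios
of factorials, and the coefficient becomes `(m+k)! (2m-k)! / ((2m)! k! (m-k)!)`, which is visibly
invariant under `k ↦ m - k`.
-/

open Nat

theorem pow_mul_eval_one_div_of_palindromic {K : Type*} [Field K] {n : ℕ} {c : ℕ → K}
    (hc : ∀ k ≤ n, c (n - k) = c k) {z : K} (hz : z ≠ 0) :
    z ^ n * (∑ k ∈ range (n + 1), C (c k) * X ^ k).eval (1 / z) =
      (∑ k ∈ range (n + 1), C (c k) * X ^ k).eval z := by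
  simp only [eval_finsetSum, eval_mul, eval_C, eval_pow, eval_X, mul_sum]
  rw [← sum_range_reflect]
  refine sum_congr rfl fun k hk => ?_
  have hkn : k ≤ n := Nat.lt_succ_iff.mp (mem_range.mp hk)
  rw [Nat.add_sub_cancel, hc k hkn]
  obtain ⟨j, rfl⟩ := Nat.exists_eq_add_of_le hkn
  rw [Nat.add_sub_cancel_left, pow_add, one_div, inv_pow]
  field_simp

theorem poch_natCast_add_one (m k : ℕ) : poch ((m : ℚ) + 1) k = (m + k)! / m ! := by
  rw [eq_div_iff (by positivity), poch, ← Nat.cast_succ, ascPochhammer_nat_eq_natCast_ascFactorial,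
    ← Nat.cast_mul, mul_comm, Nat.factorial_mul_ascFactorial]

theorem poch_neg_natCast {n k : ℕ} (hk : k ≤ n) : poch (-(n : ℚ)) k = (-1) ^ k * n ! / (n - k)! := by
  rw [eq_div_iff (by positivity), poch, ascPochhammer_eval_neg_eq_descPochhammer,
    descPochhammer_eval_eq_descFactorial, mul_assoc, ← Nat.cast_mul, mul_comm (descFactorial _ _),
    Nat.factorial_mul_descFactorial hk]

theorem Pcoef_two_mul {m k : ℕ} (hk : k ≤ m) :
    Pcoef (2 * m) k = (m + k)! * (2 * m - k)! / ((2 * m)! * (k ! * (m - k)!)) := by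
  have hhalf : ((2 * m : ℕ) : ℚ) / 2 = m := by push_cast; ring
  rw [Pcoef, neg_div, hhalf, poch_natCast_add_one, poch_neg_natCast hk,
    poch_neg_natCast (by omega : k ≤ 2 * m)]
  field_simp

theorem Pcoef_two_mul_sub {m k : ℕ} (hk : k ≤ m) : Pcoef (2 * m) (m - k) = Pcoef (2 * m) k := by
  rw [Pcoef_two_mul hk, Pcoef_two_mul (Nat.sub_le m k), Nat.sub_sub_self hk,
    show m + (m - k) = 2 * m - k by omega, show 2 * m - (m - k) = m + k by omega]
  ring

theorem stmt16_general (N : ℕ) (heven : Even N) :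
    (∀ k ≤ N / 2, Pcoef N k = Pcoef N (N / 2 - k)) ∧
    ∀ z : ℚ, z ≠ 0 → z ^ (N / 2) * (Ppoly N).eval (1 / z) = (Ppoly N).eval z := by
  obtain ⟨m, rfl⟩ := even_iff_two_dvd.mp heven
  have hhalf : 2 * m / 2 = m := by omega
  simp only [Ppoly, hhalf]
  exact ⟨fun k hk => (Pcoef_two_mul_sub hk).symm,
    fun z hz => pow_mul_eval_one_div_of_palindromic (fun k hk => Pcoef_two_mul_sub hk) hz⟩

theorem stmt16 (N : ℕ) (hN : 0 < N) (heven : Even N) :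
    (∀ k ≤ N / 2, Pcoef N k = Pcoef N (N / 2 - k)) ∧
    ∀ z : ℚ, z ≠ 0 → z ^ (N / 2) * (Ppoly N).eval (1 / z) = (Ppoly N).eval z :=
  stmt16_general N heven
end
end

section
/- Let p be an odd prime and N = p − 1, and let H_p(z) = ∑_{k=0}^{(p−1)/2} binomial((p−1)/2, k)² z^k be the Igusa polynomial. Then for every 0 ≤ k ≤ (p−1)/2, the integer congruence binomial((p−1)/2, k)² · (−N)_k · k! ≡ (−N/2)_k · (N/2+1)_k (mod p) holds. Consequently, the coefficients of P_N are p-integral and the reduction of P_N modulo p equals H_p in 𝔽_p[z]. -/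
open Polynomial Finset

noncomputable section

/-- The rising Pochhammer symbol `(q)_k = q(q+1)⋯(q+k-1)` over `ℤ`. -/
def pochZ (q : ℤ) (k : ℕ) : ℤ := (ascPochhammer ℤ k).eval q

lemma pochZ_cast (p : ℕ) (a : ℤ) (k : ℕ) :
    ((pochZ a k : ℤ) : ZMod p) = (ascPochhammer (ZMod p) k).eval ((a : ZMod p)) := by
  rw [pochZ, ← ascPochhammer_map (Int.castRingHom (ZMod p)) k, eval_map]
  exact (eval₂_at_apply (Int.castRingHom (ZMod p)) a).symm

lemma pochZ_neg (m k : ℕ) :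
    pochZ (-(m : ℤ)) k = (-1) ^ k * ((k.factorial * m.choose k : ℕ) : ℤ) := by
  rw [pochZ, ascPochhammer_eval_neg_eq_descPochhammer,
    descPochhammer_eval_eq_descFactorial, ← Nat.descFactorial_eq_factorial_mul_choose]

lemma poch_cast (a : ℤ) (k : ℕ) : poch ((a : ℤ) : ℚ) k = ((pochZ a k : ℤ) : ℚ) := by
  rw [poch, pochZ, ← ascPochhammer_map (Int.castRingHom ℚ) k, eval_map]
  exact (eval₂_at_apply (Int.castRingHom ℚ) a)

lemma den_dvd' (a b : ℤ) : (((a : ℚ) / (b : ℚ)).den : ℤ) ∣ b := by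
  rw [← Rat.divInt_eq_div]; exact Rat.den_dvd a b


theorem stmt18 (p : ℕ) (hp : p.Prime) (hodd : p ≠ 2) (N : ℕ) (hN : N = p - 1) :
    (∀ k ≤ (p - 1) / 2,
      ((((p - 1) / 2).choose k : ℤ)) ^ 2 * pochZ (-(N : ℤ)) k * (Nat.factorial k : ℤ) ≡
        pochZ (-(((p - 1) / 2 : ℕ) : ℤ)) k * pochZ ((((p - 1) / 2 : ℕ) : ℤ) + 1) k
          [ZMOD (p : ℤ)]) ∧
    (∀ k : ℕ, ¬ p ∣ ((Ppoly N).coeff k).den) ∧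
    (∀ k : ℕ, ratRed p ((Ppoly N).coeff k) = ((((p - 1) / 2).choose k : ZMod p)) ^ 2) := by
  haveI : Fact p.Prime := ⟨hp⟩
  obtain ⟨j, hj⟩ := hp.odd_of_ne_two hodd
  have hp2 : 2 ≤ p := hp.two_le
  set m : ℕ := (p - 1) / 2 with hmdef
  have hmj : m = j := by omega
  have hNm : N = 2 * m := by omega
  have hmp : m < p := by omega
  -- basic ZMod p facts
  have h0 : ((2 * m + 1 : ℕ) : ZMod p) = 0 := by
    have : 2 * m + 1 = p := by omega
    rw [this]; exact ZMod.natCast_self p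
  have hz : (2 * (m : ZMod p) + 1) = 0 := by push_cast at h0; exact h0
  have hm1 : ((-(m : ℤ) : ℤ) : ZMod p) = (m : ZMod p) + 1 := by
    push_cast; linear_combination -hz
  have hN1 : ((-(N : ℤ) : ℤ) : ZMod p) = 1 := by
    push_cast [hNm]; linear_combination -hz
  -- eval of ascPochhammer at m+1 over ZMod p
  have hE : ∀ k : ℕ, (ascPochhammer (ZMod p) k).eval ((m : ZMod p) + 1)
      = (-1) ^ k * (k.factorial : ZMod p) * (m.choose k : ZMod p) := by
    intro k
    rw [← hm1, ← pochZ_cast, pochZ_neg]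
    push_cast; ring
  have hF : ∀ k : ℕ, ((pochZ (-(N : ℤ)) k : ℤ) : ZMod p) = (k.factorial : ZMod p) := by
    intro k
    rw [pochZ_cast, hN1, ascPochhammer_eval_one]
  have hG : ∀ k : ℕ, ((pochZ ((m : ℤ) + 1) k : ℤ) : ZMod p)
      = (-1) ^ k * (k.factorial : ZMod p) * (m.choose k : ZMod p) := by
    intro k
    rw [pochZ_cast, ← hE k]
    push_cast; rfl
  have hH : ∀ k : ℕ, ((pochZ (-(m : ℤ)) k : ℤ) : ZMod p)
      = (-1) ^ k * (k.factorial : ZMod p) * (m.choose k : ZMod p) := by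
    intro k; rw [pochZ_cast, hm1, hE k]
  -- Part 1
  have part1 : ∀ k : ℕ,
      ((m.choose k : ℤ)) ^ 2 * pochZ (-(N : ℤ)) k * (Nat.factorial k : ℤ) ≡
        pochZ (-(m : ℤ)) k * pochZ ((m : ℤ) + 1) k [ZMOD (p : ℤ)] := by
    intro k
    have := (ZMod.intCast_eq_intCast_iff
      (((m.choose k : ℤ)) ^ 2 * pochZ (-(N : ℤ)) k * (Nat.factorial k : ℤ))
      (pochZ (-(m : ℤ)) k * pochZ ((m : ℤ) + 1) k) p).mp ?_
    · exact_mod_cast this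
    push_cast
    rw [hF k, hG k, hH k]
    ring_nf
    rw [pow_mul', neg_one_sq, one_pow, mul_one]
  have hN2 : N / 2 = m := by omega
  have hcoeff : ∀ k : ℕ, (Ppoly N).coeff k = if k ≤ m then Pcoef N k else 0 := by
    intro k
    rw [Ppoly, finset_sum_coeff]
    simp only [coeff_C_mul, coeff_X_pow, mul_ite, mul_one, mul_zero, hN2]
    rw [Finset.sum_ite_eq (Finset.range (m + 1)) k (fun j => Pcoef N j)]
    simp [Nat.lt_succ_iff]
  have hPcoef : ∀ k : ℕ, Pcoef N k =
      ((pochZ (-(m : ℤ)) k * pochZ ((m : ℤ) + 1) k : ℤ) : ℚ) /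
      ((pochZ (-(N : ℤ)) k * (k.factorial : ℤ) : ℤ) : ℚ) := by
    intro k
    have h1 : -(N : ℚ) / 2 = ((-(m : ℤ) : ℤ) : ℚ) := by push_cast [hNm]; ring
    have h2 : (N : ℚ) / 2 + 1 = (((m : ℤ) + 1 : ℤ) : ℚ) := by push_cast [hNm]; ring
    have h3 : -(N : ℚ) = ((-(N : ℤ) : ℤ) : ℚ) := by push_cast; ring
    rw [Pcoef, h1, h2, h3, poch_cast, poch_cast, poch_cast]
    push_cast; ring
  have hkf : ∀ k ≤ m, ((k.factorial : ℕ) : ZMod p) ≠ 0 := by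
    intro k hk h
    rw [ZMod.natCast_eq_zero_iff] at h
    have := (Nat.Prime.dvd_factorial hp).mp h
    omega
  have hBzmod : ∀ k : ℕ, ((pochZ (-(N : ℤ)) k * (k.factorial : ℤ) : ℤ) : ZMod p)
      = (k.factorial : ZMod p) * (k.factorial : ZMod p) := by
    intro k; push_cast; rw [hF k]
  have hBden : ∀ k ≤ m, ¬ ((p : ℤ) ∣ pochZ (-(N : ℤ)) k * (k.factorial : ℤ)) := by
    intro k hk hdvd
    rw [← ZMod.intCast_zmod_eq_zero_iff_dvd, hBzmod k] at hdvd
    exact hkf k hk (mul_self_eq_zero.mp hdvd)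
  have hden : ∀ k ≤ m, ¬ p ∣ (((pochZ (-(m : ℤ)) k * pochZ ((m : ℤ) + 1) k : ℤ) : ℚ) /
      ((pochZ (-(N : ℤ)) k * (k.factorial : ℤ) : ℤ) : ℚ)).den := by
    intro k hk hdvd
    exact hBden k hk (dvd_trans (Int.natCast_dvd_natCast.mpr hdvd) (den_dvd' _ _))
  refine ⟨fun k _ => part1 k, ?_, ?_⟩
  · intro k
    rcases le_or_gt k m with hk | hk
    · rw [hcoeff k, if_pos hk, hPcoef k]
      exact hden k hk
    · rw [hcoeff k, if_neg (by omega)]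
      simp only [Rat.den_zero, Nat.dvd_one]
      omega
  · intro k
    rcases le_or_gt k m with hk | hk
    · rw [hcoeff k, if_pos hk, hPcoef k]
      set A : ℤ := pochZ (-(m : ℤ)) k * pochZ ((m : ℤ) + 1) k with hA
      set B : ℤ := pochZ (-(N : ℤ)) k * (k.factorial : ℤ) with hB
      set q : ℚ := ((A : ℤ) : ℚ) / ((B : ℤ) : ℚ) with hq
      have hBne : B ≠ 0 := by
        intro h
        apply hBden k hk
        rw [← hB, h]
        exact dvd_zero _
      have hBQ : ((B : ℤ) : ℚ) ≠ 0 := Int.cast_ne_zero.mpr hBne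
      have hqB : q * B = A := div_mul_cancel₀ _ hBQ
      have hdQ : ((q.den : ℕ) : ℚ) ≠ 0 := Nat.cast_ne_zero.mpr q.den_nz
      have hnum : (q.num : ℚ) * (B : ℚ) = (A : ℚ) * (q.den : ℚ) := by
        have h2 : q * (q.den : ℚ) = (q.num : ℚ) := by
          nth_rewrite 1 [← Rat.num_div_den q]
          exact div_mul_cancel₀ _ hdQ
        rw [← h2, mul_right_comm q _ ((B:ℤ):ℚ), hqB]
      have hintZ : q.num * B = A * (q.den : ℤ) := by exact_mod_cast hnum
      have hzmod : (q.num : ZMod p) * ((B : ℤ) : ZMod p)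
          = ((A : ℤ) : ZMod p) * ((q.den : ℕ) : ZMod p) := by
        have := congrArg (fun x : ℤ => (x : ZMod p)) hintZ
        push_cast at this ⊢
        exact this
      have hAzmod : ((A : ℤ) : ZMod p) = ((m.choose k : ZMod p)) ^ 2 * ((B : ℤ) : ZMod p) := by
        have h3 := (ZMod.intCast_eq_intCast_iff _ _ p).mpr (part1 k)
        rw [hA, hB]
        push_cast at h3 ⊢
        rw [← h3]; ring
      have hBz : ((B : ℤ) : ZMod p) ≠ 0 := by
        rw [hB, hBzmod k]
        exact mul_ne_zero (hkf k hk) (hkf k hk)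
      have hnum2 : (q.num : ZMod p) = ((m.choose k : ZMod p)) ^ 2 * ((q.den : ℕ) : ZMod p) := by
        apply mul_right_cancel₀ hBz
        rw [hzmod, hAzmod]; ring
      have hdz : ((q.den : ℕ) : ZMod p) ≠ 0 := by
        intro h
        rw [ZMod.natCast_eq_zero_iff] at h
        exact hden k hk h
      rw [ratRed, hnum2, mul_assoc, mul_inv_cancel₀ hdz, mul_one]
    · rw [hcoeff k, if_neg (by omega)]
      rw [Nat.choose_eq_zero_of_lt hk]
      simp [ratRed]
end
end
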